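/- arXiv:math/0601676 — 2 statements merged into one kernel-verified Lean document; each statement's English description precedes it below -/
import Mathlib

section
/- Suppose N_{A_n}(T_1,...,T_d,T) is given by the product formula (n+1)^d · ∏_{i=1}^{d} (1/(n − rk T_i + 1)) · C(n − rk T_i + 1; m_1^{(i)},...,m_n^{(i)}) · (1/(n−r+1)) · C(n−r+1; m_1,...,m_n) for a composition type T = A_1^{m_1} * ... * A_n^{m_n} of rank r = m_1 + 2m_2 + ... + n·m_n = n − rk T_1 − ... − rk T_d. Then the sum of these values over all types T of rank r equals (n+1)^{d−1} · C(n+1, rk T_1 + ... + rk T_d + 1) · ∏_{i=1}^{d} (1/(n − rk T_i + 1)) · C(n − rk T_i + 1; m_1^{(i)},...,m_n^{(i)}). -/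
/-- The multinomial coefficient `M! / (m₁!⋯m_k!(M - ∑ m_i)!)`, zero if `∑ m_i > M`. -/
def multinom {k : ℕ} (M : ℕ) (m : Fin k → ℕ) : ℕ :=
  if (∑ i, m i) ≤ M then
    M.factorial / ((∏ i, (m i).factorial) * (M - ∑ i, m i).factorial)
  else 0

open Finset Polynomial

lemma geom_coeff (n j : ℕ) :
    (∑ i ∈ Finset.range (n+1), (Polynomial.X : Polynomial ℕ) ^ i).coeff j
      = if j ≤ n then 1 else 0 := by
  rw [Polynomial.finset_sum_coeff]
  simp [Polynomial.coeff_X_pow, Nat.lt_succ_iff]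

lemma geom_pow_coeff (n : ℕ) : ∀ (M r : ℕ), r ≤ n →
    ((∑ i ∈ Finset.range (n+1), (Polynomial.X : Polynomial ℕ) ^ i) ^ M).coeff r
      = (M + r - 1).choose r := by
  intro M
  induction M with
  | zero =>
    intro r hr
    rcases Nat.eq_zero_or_pos r with h | h
    · subst h; simp
    · simp only [pow_zero, Polynomial.coeff_one]
      rw [if_neg (by omega), eq_comm]
      exact Nat.choose_eq_zero_of_lt (by omega)
  | succ M ih =>
    intro r hr
    rw [pow_succ', Polynomial.coeff_mul,
      Finset.Nat.sum_antidiagonal_eq_sum_range_succ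
        (fun a b => (∑ i ∈ Finset.range (n+1), (Polynomial.X : Polynomial ℕ) ^ i).coeff a *
          ((∑ i ∈ Finset.range (n+1), (Polynomial.X : Polynomial ℕ) ^ i) ^ M).coeff b)]
    have h1 : ∀ k ∈ Finset.range (r+1),
        (∑ i ∈ Finset.range (n+1), (Polynomial.X : Polynomial ℕ) ^ i).coeff k *
          ((∑ i ∈ Finset.range (n+1), (Polynomial.X : Polynomial ℕ) ^ i) ^ M).coeff (r - k)
        = (M + (r - k) - 1).choose (r - k) := by
      intro k hk
      rw [Finset.mem_range] at hk
      rw [geom_coeff, if_pos (by omega), one_mul, ih (r - k) (by omega)]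
    rw [Finset.sum_congr rfl h1]
    have hrefl := Finset.sum_range_reflect (fun j => (M + j - 1).choose j) (r+1)
    simp only [Nat.add_sub_cancel] at hrefl
    rw [hrefl]
    rcases Nat.eq_zero_or_pos M with hM | hM
    · subst hM
      rw [Finset.sum_range_succ']
      have : ∀ j ∈ Finset.range r, (0 + (j+1) - 1).choose (j+1) = 0 := by
        intro j hj
        simp only [Nat.zero_add, Nat.add_sub_cancel]
        exact Nat.choose_eq_zero_of_lt (by omega)
      rw [Finset.sum_congr rfl this]
      simp
    · obtain ⟨M', rfl⟩ : ∃ M', M = M' + 1 := ⟨M - 1, by omega⟩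
      have h2 : ∀ j ∈ Finset.range (r+1), (M' + 1 + j - 1).choose j = (M' + j).choose M' := by
        intro j hj
        have : M' + 1 + j - 1 = M' + j := by omega
        rw [this]
        have := Nat.choose_symm (n := M' + j) (k := j) (by omega)
        rw [show M' + j - j = M' by omega] at this
        exact this.symm
      rw [Finset.sum_congr rfl h2]
      have h3 := Finset.sum_Ico_eq_sum_range (f := fun i => i.choose M') (m := M') (n := M' + r + 1)
      rw [show M' + r + 1 - M' = r + 1 by omega] at h3
      rw [← h3, Finset.Ico_add_one_right_eq_Icc, Nat.sum_Icc_choose]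
      have := Nat.choose_symm (n := M' + 1 + r) (k := r) (by omega)
      rw [show M' + 1 + r - r = M' + 1 by omega] at this
      rw [show M' + r + 1 = M' + 1 + r by omega, this]
      congr 1
      omega

def auxK (n M : ℕ) (μ : Fin n → ℕ) : ℕ → ℕ := fun i =>
  if i = 0 then M - ∑ j, μ j else if h : i - 1 < n then μ ⟨i - 1, h⟩ else 0

lemma auxK_zero (n M : ℕ) (μ : Fin n → ℕ) : auxK n M μ 0 = M - ∑ j, μ j := rfl

lemma auxK_succ (n M : ℕ) (μ : Fin n → ℕ) (i : ℕ) :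
    auxK n M μ (i + 1) = if h : i < n then μ ⟨i, h⟩ else 0 := by
  simp [auxK]

lemma auxK_fin (n M : ℕ) (μ : Fin n → ℕ) (j : Fin n) :
    auxK n M μ ((j : ℕ) + 1) = μ j := by
  rw [auxK_succ, dif_pos j.2]

lemma auxK_large (n M : ℕ) (μ : Fin n → ℕ) (i : ℕ) (h : n + 1 ≤ i) : auxK n M μ i = 0 := by
  rw [auxK, if_neg (by omega), dif_neg (by omega)]

lemma auxK_sum (n M : ℕ) (μ : Fin n → ℕ) :
    ∑ i ∈ Finset.range (n+1), auxK n M μ i = (M - ∑ j, μ j) + ∑ j, μ j := by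
  rw [Finset.sum_range_succ', auxK_zero, add_comm]
  congr 1
  rw [← Fin.sum_univ_eq_sum_range (fun i => auxK n M μ (i + 1)) n]
  exact Finset.sum_congr rfl fun j _ => auxK_fin n M μ j

lemma auxK_rank (n M : ℕ) (μ : Fin n → ℕ) :
    ∑ i ∈ Finset.range (n+1), i * auxK n M μ i = ∑ j : Fin n, ((j : ℕ) + 1) * μ j := by
  rw [Finset.sum_range_succ']
  simp only [Nat.zero_mul, add_zero]
  rw [← Fin.sum_univ_eq_sum_range (fun i => (i + 1) * auxK n M μ (i + 1)) n]
  exact Finset.sum_congr rfl fun j _ => by rw [auxK_fin]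

lemma auxK_prod_factorial (n M : ℕ) (μ : Fin n → ℕ) :
    ∏ i ∈ Finset.range (n+1), (auxK n M μ i).factorial
      = (∏ j : Fin n, (μ j).factorial) * (M - ∑ j, μ j).factorial := by
  rw [Finset.prod_range_succ', auxK_zero]
  congr 1
  rw [← Fin.prod_univ_eq_prod_range (fun i => (auxK n M μ (i + 1)).factorial) n]
  exact Finset.prod_congr rfl fun j _ => by rw [auxK_fin]

lemma ksum_split (n : ℕ) (k : ℕ → ℕ) :
    ∑ i ∈ Finset.range (n+1), k i = (∑ j : Fin n, k ((j : ℕ) + 1)) + k 0 := by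
  rw [Finset.sum_range_succ', ← Fin.sum_univ_eq_sum_range (fun i => k (i + 1)) n]

lemma krank_split (n : ℕ) (k : ℕ → ℕ) :
    ∑ i ∈ Finset.range (n+1), i * k i = ∑ j : Fin n, ((j : ℕ) + 1) * k ((j : ℕ) + 1) := by
  rw [Finset.sum_range_succ', ← Fin.sum_univ_eq_sum_range (fun i => (i + 1) * k (i + 1)) n]
  simp

lemma sum_multinom (n M r : ℕ) (hr : r ≤ n)
    (hgeom : ((∑ i ∈ Finset.range (n+1), (Polynomial.X : Polynomial ℕ) ^ i) ^ M).coeff r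
      = (M + r - 1).choose r) :
    ∑ μ ∈ Finset.filter (fun μ : Fin n → ℕ => ∑ j, (j.1 + 1) * μ j = r)
        (Fintype.piFinset fun _ : Fin n => Finset.range (r + 1)),
      multinom M μ = (M + r - 1).choose r := by
  rw [← hgeom, Finset.sum_pow_eq_sum_piAntidiag (Finset.range (n+1))
      (fun i => (Polynomial.X : Polynomial ℕ) ^ i) M, Polynomial.finset_sum_coeff]
  have hterm : ∀ k ∈ Finset.piAntidiag (Finset.range (n+1)) M,
      ((Nat.multinomial (Finset.range (n+1)) k : Polynomial ℕ)
          * ∏ i ∈ Finset.range (n+1), ((Polynomial.X : Polynomial ℕ) ^ i) ^ k i).coeff r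
        = if ∑ i ∈ Finset.range (n+1), i * k i = r
            then Nat.multinomial (Finset.range (n+1)) k else 0 := by
    intro k _
    rw [show (∏ i ∈ Finset.range (n+1), ((Polynomial.X : Polynomial ℕ) ^ i) ^ k i)
        = Polynomial.X ^ (∑ i ∈ Finset.range (n+1), i * k i) by
      rw [← Finset.prod_pow_eq_pow_sum]
      exact Finset.prod_congr rfl fun i _ => by rw [← pow_mul]]
    rw [← Polynomial.C_eq_natCast, Polynomial.coeff_C_mul, Polynomial.coeff_X_pow]
    rcases eq_or_ne (∑ i ∈ Finset.range (n+1), i * k i) r with h | h <;> simp [h]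
    exact fun h' => absurd h'.symm h
  rw [Finset.sum_congr rfl hterm, ← Finset.sum_filter]
  rw [← Finset.sum_filter_add_sum_filter_not
      (Finset.filter (fun μ : Fin n → ℕ => ∑ j, (j.1 + 1) * μ j = r)
        (Fintype.piFinset fun _ : Fin n => Finset.range (r + 1)))
      (fun μ => ∑ j, μ j ≤ M) (fun μ => multinom M μ)]
  have hz : ∑ μ ∈ Finset.filter (fun μ => ¬ ∑ j, μ j ≤ M)
      (Finset.filter (fun μ : Fin n → ℕ => ∑ j, (j.1 + 1) * μ j = r)
        (Fintype.piFinset fun _ : Fin n => Finset.range (r + 1))), multinom M μ = 0 := by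
    apply Finset.sum_eq_zero
    intro μ hμ
    rw [Finset.mem_filter] at hμ
    rw [multinom, if_neg hμ.2]
  rw [hz, add_zero, Finset.filter_filter]
  clear hz hterm hgeom
  refine Finset.sum_nbij' (i := auxK n M) (j := fun k (j : Fin n) => k ((j : ℕ) + 1))
    ?_ ?_ ?_ ?_ ?_
  · intro μ hμ
    rw [Finset.mem_filter] at hμ
    obtain ⟨hrank, hle⟩ := hμ.2
    rw [Finset.mem_filter, Finset.mem_piAntidiag]
    refine ⟨⟨by rw [auxK_sum]; omega, ?_⟩, by rw [auxK_rank]; exact hrank⟩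
    intro i hi
    rw [Finset.mem_range]
    by_contra hmem
    exact hi (auxK_large n M μ i (by omega))
  · intro k hk
    rw [Finset.mem_filter, Finset.mem_piAntidiag] at hk
    obtain ⟨⟨hsum, -⟩, hrank⟩ := hk
    have hsum' : ∑ i ∈ Finset.range (n+1), k i = M := hsum
    have hterm2 : ∀ j : Fin n, ((j : ℕ) + 1) * k ((j : ℕ) + 1) ≤ r := by
      intro j
      rw [← hrank]
      exact Finset.single_le_sum (f := fun i => i * k i) (fun i _ => Nat.zero_le _)
        (Finset.mem_range.2 (by omega))
    rw [Finset.mem_filter]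
    constructor
    · rw [Fintype.mem_piFinset]
      intro j
      rw [Finset.mem_range]
      have h1 := hterm2 j
      have h2 := Nat.le_mul_of_pos_left (k ((j : ℕ) + 1)) (show 0 < (j : ℕ) + 1 by omega)
      clear hterm2
      beta_reduce
      omega
    · refine ⟨by rw [← krank_split]; exact hrank, ?_⟩
      have := ksum_split n k
      clear hterm2
      beta_reduce
      omega
  · intro μ hμ
    funext j
    exact auxK_fin n M μ j
  · intro k hk
    rw [Finset.mem_filter, Finset.mem_piAntidiag] at hk
    obtain ⟨⟨hsum, hsupp⟩, -⟩ := hk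
    have hsum' : ∑ i ∈ Finset.range (n+1), k i = M := hsum
    have h0 := ksum_split n k
    funext i
    rcases Nat.eq_zero_or_pos i with rfl | hi
    · rw [auxK_zero]
      clear hsupp
      beta_reduce
      omega
    · rcases Nat.lt_or_ge (i - 1) n with h1 | h1
      · obtain ⟨i', rfl⟩ : ∃ i', i = i' + 1 := ⟨i - 1, by omega⟩
        rw [auxK_succ, dif_pos (by omega : i' < n)]
      · rw [auxK_large n M _ i (by omega)]
        by_contra hne
        have := hsupp i (Ne.symm hne)
        rw [Finset.mem_range] at this
        omega
  · intro μ hμ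
    rw [Finset.mem_filter] at hμ
    obtain ⟨hrank, hle⟩ := hμ.2
    rw [multinom, if_pos hle]
    unfold Nat.multinomial
    rw [show Finset.sum (Finset.range (n+1)) (auxK n M μ) = M by rw [auxK_sum]; omega,
      auxK_prod_factorial]

theorem typeA_decomposition_summation_step
    (n d r : ℕ) (hd : 1 ≤ d) (hn : 1 ≤ n)
    (rk : Fin d → ℕ) (m : Fin d → Fin n → ℕ)
    (hrk : ∀ i, ∑ j : Fin n, (j.1 + 1) * m i j = rk i)
    (hfull : (∑ i, rk i) + r = n) :
    ∑ μ ∈ Finset.filter (fun μ : Fin n → ℕ => ∑ j, (j.1 + 1) * μ j = r)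
        (Fintype.piFinset fun _ : Fin n => Finset.range (r + 1)),
      ((n + 1 : ℚ) ^ d
        * (∏ i, (1 / ((n : ℚ) - rk i + 1)) * (multinom (n - rk i + 1) (m i) : ℚ))
        * (1 / ((n : ℚ) - r + 1)) * (multinom (n - r + 1) μ : ℚ))
    = (n + 1 : ℚ) ^ (d - 1) * ((n + 1).choose ((∑ i, rk i) + 1) : ℚ)
        * ∏ i, (1 / ((n : ℚ) - rk i + 1)) * (multinom (n - rk i + 1) (m i) : ℚ) := by
  have hrn : r ≤ n := by omega
  have hne0 : n - r + 1 ≠ 0 := by omega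
  have hMr : n - r + 1 + r - 1 = n := by omega
  have hS1 : (∑ i, rk i) + 1 = n + 1 - r := by omega
  have hrn1 : r ≤ n + 1 := by omega
  obtain ⟨e, rfl⟩ : ∃ e, d = e + 1 := ⟨d - 1, by omega⟩
  have hcore : ∑ μ ∈ Finset.filter (fun μ : Fin n → ℕ => ∑ j, (j.1 + 1) * μ j = r)
        (Fintype.piFinset fun _ : Fin n => Finset.range (r + 1)),
      multinom (n - r + 1) μ = n.choose r := by
    have h := sum_multinom n (n - r + 1) r hrn (geom_pow_coeff n (n - r + 1) r hrn)
    rwa [hMr] at h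
  rw [← Finset.mul_sum, ← Nat.cast_sum, hcore, hS1, Nat.choose_symm hrn1]
  have hX : ((n : ℚ) - r + 1) = ((n - r + 1 : ℕ) : ℚ) := by
    rw [Nat.cast_add, Nat.cast_sub hrn]
    ring
  have hXne : ((n : ℚ) - r + 1) ≠ 0 := by
    rw [hX]
    exact Nat.cast_ne_zero.2 hne0
  have hkeyN : (n + 1 - r) * (n + 1).choose r = (n + 1) * n.choose r := by
    calc (n + 1 - r) * (n + 1).choose r = (n + 1).choose r * (n + 1 - r) := mul_comm _ _
      _ = (n + 1).choose (r + 1) * (r + 1) := (Nat.choose_succ_right_eq (n + 1) r).symm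
      _ = Nat.succ n * n.choose r := (Nat.add_one_mul_choose_eq n r).symm
      _ = (n + 1) * n.choose r := rfl
  have hcast : ((n + 1 - r : ℕ) : ℚ) = (n : ℚ) - r + 1 := by
    rw [Nat.cast_sub hrn1]
    push_cast
    ring
  have hkey : ((n : ℚ) - r + 1) * ((n + 1).choose r : ℚ) = ((n : ℚ) + 1) * (n.choose r : ℚ) := by
    calc ((n : ℚ) - r + 1) * ((n + 1).choose r : ℚ)
        = ((n + 1 - r : ℕ) : ℚ) * ((n + 1).choose r : ℚ) := by rw [hcast]
      _ = (((n + 1 - r) * (n + 1).choose r : ℕ) : ℚ) := by push_cast; ring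
      _ = (((n + 1) * n.choose r : ℕ) : ℚ) := by rw [hkeyN]
      _ = ((n : ℚ) + 1) * (n.choose r : ℚ) := by push_cast; ring
  have hstep : ((n : ℚ) + 1) * ((1 / ((n : ℚ) - r + 1)) * ((n.choose r : ℕ) : ℚ))
      = (((n + 1).choose r : ℕ) : ℚ) := by
    have h' : ((n : ℚ) + 1) * ((1 / ((n : ℚ) - r + 1)) * ((n.choose r : ℕ) : ℚ))
        = (((n : ℚ) + 1) * ((n.choose r : ℕ) : ℚ)) / ((n : ℚ) - r + 1) := by ring
    rw [h', div_eq_iff hXne]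
    linear_combination -hkey
  simp only [Nat.add_sub_cancel]
  rw [show ((n : ℚ) + 1) ^ (e + 1)
        * (∏ i, (1 / ((n : ℚ) - rk i + 1)) * (multinom (n - rk i + 1) (m i) : ℚ))
        * (1 / ((n : ℚ) - r + 1)) * ((n.choose r : ℕ) : ℚ)
      = ((n : ℚ) + 1) ^ e
        * (((n : ℚ) + 1) * ((1 / ((n : ℚ) - r + 1)) * ((n.choose r : ℕ) : ℚ)))
        * (∏ i, (1 / ((n : ℚ) - rk i + 1)) * (multinom (n - rk i + 1) (m i) : ℚ)) by ring,
    hstep]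
end

section
/- Let M(x, y) be a polynomial in two variables of total degree at most n in each variable, and suppose the reciprocity relation y^n · M_{−}(xy, 1/y) = M(x, y) holds, where M_{−} denotes M with a parameter m replaced by −m, and suppose F(x, y) = y^n · M((1+y)/(y−x), (y−x)/y). Then F satisfies F(x, y) = (1+x)^n · F_{−}(−x/(1+x), (y−x)/(1+x)), where F_{−} is F with m replaced by −m. -/
/-!
The substitution `ψ(x, y) = ((1 + y) / (y - x), (y - x) / y)` defining `F` from `M` intertwines
the involution `(x, y) ↦ (-x / (1 + x), (y - x) / (1 + x))` of (9.2) with the involution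
`(X, Y) ↦ (X Y, 1 / Y)` of (9.1), and the weights match: `(1 + x)ⁿ ((y - x) / (1 + x))ⁿ` and
`yⁿ ((y - x) / y)ⁿ` both equal `(y - x)ⁿ`. So both sides of (9.2) are `(y - x)ⁿ` times the same
value of `M₋`.
-/

section Intertwining

variable {K : Type*} [Field K] {x y : K}

theorem div_one_add_sub_neg_div_one_add (x y : K) :
    (y - x) / (1 + x) - -x / (1 + x) = y / (1 + x) := by
  ring

theorem subst_fst_intertwine (hx : 1 + x ≠ 0) (hyx : y - x ≠ 0) :
    (1 + (y - x) / (1 + x)) / ((y - x) / (1 + x) - -x / (1 + x)) =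
      (1 + y) / (y - x) * ((y - x) / y) := by
  rw [div_one_add_sub_neg_div_one_add]
  field_simp
  ring

theorem subst_snd_intertwine (hx : 1 + x ≠ 0) :
    ((y - x) / (1 + x) - -x / (1 + x)) / ((y - x) / (1 + x)) = 1 / ((y - x) / y) := by
  rw [div_one_add_sub_neg_div_one_add, div_div_div_cancel_right₀ hx, one_div_div]

theorem subst_weight_intertwine (n : ℕ) (hx : 1 + x ≠ 0) (hy : y ≠ 0) :
    (1 + x) ^ n * ((y - x) / (1 + x)) ^ n = y ^ n * ((y - x) / y) ^ n := by
  rw [← mul_pow, ← mul_pow, mul_div_cancel₀ _ hx, mul_div_cancel₀ _ hy]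

end Intertwining

theorem M_reciprocity_implies_F_reciprocity
    (n : ℕ) (M F : ℚ → ℚ → ℚ → ℚ)
    (hrec : ∀ m x y : ℚ, y ≠ 0 → y ^ n * M (-m) (x * y) (1 / y) = M m x y)
    (hF : ∀ m x y : ℚ, y - x ≠ 0 → y ≠ 0 →
      F m x y = y ^ n * M m ((1 + y) / (y - x)) ((y - x) / y))
    (m x y : ℚ) (hyx : y ≠ x) (hy : y ≠ 0) (hx : 1 + x ≠ 0) :
    F m x y = (1 + x) ^ n * F (-m) (-x / (1 + x)) ((y - x) / (1 + x)) := by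
  have hd : y - x ≠ 0 := sub_ne_zero.mpr hyx
  have hd' : (y - x) / (1 + x) - -x / (1 + x) ≠ 0 := by
    rw [div_one_add_sub_neg_div_one_add]
    exact div_ne_zero hy hx
  rw [hF m x y hd hy, hF (-m) _ _ hd' (div_ne_zero hd hx),
    ← hrec m _ _ (div_ne_zero hd hy), subst_fst_intertwine hx hd, subst_snd_intertwine hx,
    ← mul_assoc, ← mul_assoc, subst_weight_intertwine n hx hy]
end
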